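/- arXiv:2208.08703 — 10 statements merged into one kernel-verified Lean document; each statement's English description precedes it below -/
import Mathlib

section
/- If x₁, x₂, X₁₁, X₂₂, X₁₂ are reals with X₁₁ ≥ x₁², X₂₂ ≥ x₂², X₁₂ ≥ 0, and (X₁₁ − x₁²)(X₂₂ − x₂²) ≥ (X₁₂ − x₁x₂)², then X₁₁X₂₂ ≥ X₁₂². -/
theorem stmt_1 (x₁ x₂ X₁₁ X₂₂ X₁₂ : ℝ)
    (h1 : X₁₁ ≥ x₁ ^ 2) (h2 : X₂₂ ≥ x₂ ^ 2) (h3 : X₁₂ ≥ 0)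
    (h4 : (X₁₁ - x₁ ^ 2) * (X₂₂ - x₂ ^ 2) ≥ (X₁₂ - x₁ * x₂) ^ 2) :
    X₁₁ * X₂₂ ≥ X₁₂ ^ 2 := by
  have ha : X₁₁ - x₁ ^ 2 ≥ 0 := by linarith
  have hb : X₂₂ - x₂ ^ 2 ≥ 0 := by linarith
  have hs0 : (X₁₁ - x₁ ^ 2) * x₂ ^ 2 + (X₂₂ - x₂ ^ 2) * x₁ ^ 2 ≥ 0 := by
    have := mul_nonneg ha (sq_nonneg x₂)
    have := mul_nonneg hb (sq_nonneg x₁)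
    linarith
  have hs : (X₁₁ - x₁ ^ 2) * x₂ ^ 2 + (X₂₂ - x₂ ^ 2) * x₁ ^ 2 ≥
      2 * ((X₁₂ - x₁ * x₂) * (x₁ * x₂)) := by
    rcases le_or_gt (2 * ((X₁₂ - x₁ * x₂) * (x₁ * x₂))) 0 with h | h
    · linarith
    · nlinarith [sq_nonneg ((X₁₁ - x₁ ^ 2) * x₂ ^ 2 - (X₂₂ - x₂ ^ 2) * x₁ ^ 2),
        mul_le_mul_of_nonneg_right h4 (sq_nonneg (x₁ * x₂)), hs0, h]
  nlinarith [h4, hs, sq_nonneg (x₁ * x₂)]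
end

section
/- Let D ⊆ ℝⁿ be convex, let H = [l₁,u₁] × ⋯ × [l_n,u_n] be a (possibly unbounded) box, and let f : D → ℝ ∪ {∞} be convex, attaining its minimum over D at a point z ∈ D \ H. Suppose there are indices i < j such that z_k < l_k ≤ u_k for k = 1,…,i, z_k > u_k ≥ l_k for k = i+1,…,j, and l_k ≤ z_k ≤ u_k for k = j+1,…,n. Then the minimum of f over H ∩ D equals the minimum of f over I ∩ D, where I is the union of the faces of H obtained by fixing the k-th coordinate to l_k for k ≤ i and to u_k for i < k ≤ j. -/
/-!
Take `x ∈ H ∩ D` and walk along the segment from `x` towards the minimiser `z`. Convexity and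
`f z ≤ f x` keep `f ≤ f x` along the whole segment. A coordinate `k ≥ j` never leaves
`[l_k, u_k]`, since both of its endpoints lie there. A coordinate `k < j` stays in the box until
it meets its facing bound `c_k` (`l_k` for `k < i`, `u_k` otherwise), which happens at time
`(x_k - c_k) / (x_k - z_k) ∈ [0, 1]`. Stopping at the earliest of these times gives a point of
`I ∩ D` at which `f` is at most `f x`.
-/

open Set

section SegmentCrossing

variable {x z c t : ℝ}

lemma div_sub_mem_Icc_of_mem_uIcc (hc : c ∈ uIcc x z) (hcz : c ≠ z) :
    (x - c) / (x - z) ∈ Icc 0 1 := by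
  rcases mem_uIcc.1 hc with ⟨hxc, hcz'⟩ | ⟨hzc, hcx⟩
  · have hxz : x - z < 0 := by linarith [lt_of_le_of_ne hcz' hcz]
    exact ⟨div_nonneg_of_nonpos (by linarith) hxz.le, (div_le_one_of_neg hxz).2 (by linarith)⟩
  · have hxz : 0 < x - z := by linarith [lt_of_le_of_ne hzc hcz.symm]
    exact ⟨div_nonneg (by linarith) hxz.le, (div_le_one hxz).2 (by linarith)⟩

lemma combo_div_sub_eq (hxz : x ≠ z) :
    (1 - (x - c) / (x - z)) * x + (x - c) / (x - z) * z = c := by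
  have : x - z ≠ 0 := sub_ne_zero.2 hxz
  field_simp
  ring

lemma combo_mem_uIcc_of_le_div_sub (hc : c ∈ uIcc x z) (hcz : c ≠ z) (ht₀ : 0 ≤ t)
    (ht : t ≤ (x - c) / (x - z)) : (1 - t) * x + t * z ∈ uIcc x c := by
  rcases mem_uIcc.1 hc with ⟨hxc, hcz'⟩ | ⟨hzc, hcx⟩
  · have hzx : 0 < z - x := by linarith [lt_of_le_of_ne hcz' hcz]
    rw [← neg_div_neg_eq, neg_sub, neg_sub, le_div_iff₀ hzx] at ht
    exact mem_uIcc.2 (Or.inl ⟨by nlinarith, by linarith⟩)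
  · have hxz : 0 < x - z := by linarith [lt_of_le_of_ne hzc hcz.symm]
    rw [le_div_iff₀ hxz] at ht
    exact mem_uIcc.2 (Or.inr ⟨by linarith, by nlinarith⟩)

lemma combo_mem_uIcc (ht : t ∈ Icc (0 : ℝ) 1) : (1 - t) * x + t * z ∈ uIcc x z := by
  rw [← segment_eq_uIcc]
  exact ⟨1 - t, t, sub_nonneg.2 ht.2, ht.1, sub_add_cancel 1 t, rfl⟩

end SegmentCrossing

lemma EReal.coe_mul_add_coe_mul_le {a b : ℝ} (ha : 0 ≤ a) (hb : 0 ≤ b) (hab : a + b = 1)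
    {p q : EReal} (hqp : q ≤ p) : (a : EReal) * p + (b : EReal) * q ≤ p :=
  calc (a : EReal) * p + (b : EReal) * q ≤ (a : EReal) * p + (b : EReal) * p :=
        add_le_add_right (mul_le_mul_of_nonneg_left hqp (EReal.coe_nonneg.2 hb)) _
    _ = p := by
      rw [← EReal.right_distrib_of_nonneg (EReal.coe_nonneg.2 ha) (EReal.coe_nonneg.2 hb),
        ← EReal.coe_add, hab, EReal.coe_one, one_mul]

lemma EReal.toReal_mem_uIcc {a b : ℝ} {e : EReal}
    (h : (b : EReal) < e ∧ e ≤ a ∨ (a : EReal) ≤ e ∧ e < b) :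
    (e.toReal : EReal) = e ∧ e.toReal ∈ uIcc a b ∧ e.toReal ≠ b := by
  have he : (e.toReal : EReal) = e := by
    rcases h with ⟨hb, ha⟩ | ⟨ha, hb⟩
    · exact EReal.coe_toReal (ne_top_of_le_ne_top (EReal.coe_ne_top a) ha) (ne_bot_of_gt hb)
    · exact EReal.coe_toReal (ne_top_of_lt hb) (ne_bot_of_le_ne_bot (EReal.coe_ne_bot a) ha)
  rw [← he, EReal.coe_lt_coe_iff, EReal.coe_le_coe_iff, EReal.coe_le_coe_iff,
    EReal.coe_lt_coe_iff] at h
  refine ⟨he, mem_uIcc.2 ?_, ?_⟩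
  · rcases h with ⟨hb, ha⟩ | ⟨ha, hb⟩
    exacts [Or.inr ⟨hb.le, ha⟩, Or.inl ⟨ha, hb.le⟩]
  · rcases h with ⟨hb, -⟩ | ⟨-, hb⟩
    exacts [hb.ne', hb.ne]

section Box

variable {ι : Type*} {x z : ι → ℝ} {S : Finset ι}

theorem exists_combo_mem_pi_eq {s : ι → Set ℝ} (hs : ∀ k, (s k).OrdConnected) {c : ι → ℝ}
    (hx : ∀ k, x k ∈ s k) (hS : S.Nonempty)
    (hc : ∀ k ∈ S, c k ∈ s k ∧ c k ∈ uIcc (x k) (z k) ∧ c k ≠ z k)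
    (hz : ∀ k ∉ S, z k ∈ s k) :
    ∃ t ∈ Icc (0 : ℝ) 1, (∀ k, ((1 - t) • x + t • z) k ∈ s k) ∧
      ∃ k ∈ S, ((1 - t) • x + t • z) k = c k := by
  obtain ⟨k₀, hk₀, hmin⟩ := S.exists_min_image (fun k => (x k - c k) / (x k - z k)) hS
  obtain ⟨hck₀, hc_mem, hc_ne⟩ := hc k₀ hk₀
  have ht := div_sub_mem_Icc_of_mem_uIcc hc_mem hc_ne
  refine ⟨_, ht, fun k => ?_, k₀, hk₀, combo_div_sub_eq fun hxz => hc_ne ?_⟩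
  · by_cases hk : k ∈ S
    · obtain ⟨hck, hc_mem, hc_ne⟩ := hc k hk
      exact (hs k).uIcc_subset (hx k) hck
        (combo_mem_uIcc_of_le_div_sub hc_mem hc_ne ht.1 (hmin k hk))
    · exact (hs k).uIcc_subset (hx k) (hz k hk) (combo_mem_uIcc ht)
  · rwa [hxz, uIcc_self, mem_singleton_iff] at hc_mem

theorem exists_combo_mem_box_coe_eq {l u e : ι → EReal}
    (hx : ∀ k, l k ≤ x k ∧ (x k : EReal) ≤ u k) (hS : S.Nonempty)
    (he : ∀ k ∈ S, e k = l k ∧ (z k : EReal) < l k ∨ e k = u k ∧ u k < z k)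
    (hz : ∀ k ∉ S, l k ≤ z k ∧ (z k : EReal) ≤ u k) :
    ∃ t ∈ Icc (0 : ℝ) 1, (∀ k, l k ≤ ((1 - t) • x + t • z) k ∧
        (((1 - t) • x + t • z) k : EReal) ≤ u k) ∧
      ∃ k ∈ S, (((1 - t) • x + t • z) k : EReal) = e k := by
  have hc : ∀ k ∈ S, e k ∈ Icc (l k) (u k) ∧ ((e k).toReal : EReal) = e k ∧
      (e k).toReal ∈ uIcc (x k) (z k) ∧ (e k).toReal ≠ z k := by
    intro k hk
    have hlu : l k ≤ u k := (hx k).1.trans (hx k).2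
    rcases he k hk with ⟨hel, hzl⟩ | ⟨heu, huz⟩
    · rw [hel]
      exact ⟨⟨le_rfl, hlu⟩, EReal.toReal_mem_uIcc (Or.inl ⟨hzl, (hx k).1⟩)⟩
    · rw [heu]
      exact ⟨⟨hlu, le_rfl⟩, EReal.toReal_mem_uIcc (Or.inr ⟨(hx k).2, huz⟩)⟩
  obtain ⟨t, ht, hmem, k, hk, hyk⟩ := exists_combo_mem_pi_eq
    (s := fun k => ((↑) : ℝ → EReal) ⁻¹' Icc (l k) (u k)) (c := fun k => (e k).toReal)
    (fun k => ordConnected_Icc.preimage_mono EReal.coe_strictMono.monotone) hx hS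
    (fun k hk => ⟨(hc k hk).2.1 ▸ (hc k hk).1, (hc k hk).2.2⟩) hz
  exact ⟨t, ht, hmem, k, hk, by rw [hyk, (hc k hk).2.1]⟩

end Box

theorem stmt_5_general (n : ℕ) (D : Set (Fin n → ℝ)) (hD : Convex ℝ D)
    (l u : Fin n → EReal) (f : (Fin n → ℝ) → EReal)
    (hconv : ∀ x ∈ D, ∀ y ∈ D, ∀ a b : ℝ, 0 ≤ a → 0 ≤ b → a + b = 1 →
      f (a • x + b • y) ≤ (a : EReal) * f x + (b : EReal) * f y)
    (H : Set (Fin n → ℝ))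
    (hH : H = {x | ∀ k, l k ≤ (x k : EReal) ∧ (x k : EReal) ≤ u k})
    (z : Fin n → ℝ) (hzD : z ∈ D)
    (hzmin : ∀ w ∈ D, f z ≤ f w)
    (i j : ℕ) (hij : i < j) (hjn : j ≤ n)
    (hlow : ∀ k : Fin n, (k : ℕ) < i → (z k : EReal) < l k ∧ l k ≤ u k)
    (hhigh : ∀ k : Fin n, i ≤ (k : ℕ) → (k : ℕ) < j → u k < (z k : EReal) ∧ l k ≤ u k)
    (hmid : ∀ k : Fin n, j ≤ (k : ℕ) → l k ≤ (z k : EReal) ∧ (z k : EReal) ≤ u k)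
    (I : Set (Fin n → ℝ))
    (hI : I = (⋃ k : Fin n, ⋃ _ : (k : ℕ) < i, {x ∈ H | (x k : EReal) = l k}) ∪
              (⋃ k : Fin n, ⋃ _ : i ≤ (k : ℕ) ∧ (k : ℕ) < j, {x ∈ H | (x k : EReal) = u k})) :
    sInf (f '' (H ∩ D)) = sInf (f '' (I ∩ D)) := by
  have hIH : I ⊆ H := by
    rw [hI]
    rintro x (hx | hx) <;> obtain ⟨k, _, hx, _⟩ := mem_iUnion₂.1 hx <;> exact hx
  refine le_antisymm (sInf_le_sInf (image_mono (inter_subset_inter_left _ hIH)))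
    (sInf_le_sInf_of_isCoinitialFor ?_)
  rintro _ ⟨x, ⟨hxH, hxD⟩, rfl⟩
  rw [hH] at hxH
  set S := Finset.univ.filter fun k : Fin n => (k : ℕ) < j
  have hS : ∀ k, k ∈ S ↔ (k : ℕ) < j := by simp [S]
  obtain ⟨t, ⟨ht₀, ht₁⟩, hyH, k, hkS, hyk⟩ := exists_combo_mem_box_coe_eq (S := S) (z := z)
    (e := fun k => if (k : ℕ) < i then l k else u k) hxH ⟨⟨0, by omega⟩, (hS _).2 (i.zero_le.trans_lt hij)⟩
    (fun k hk => by
      by_cases hki : (k : ℕ) < i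
      · exact Or.inl ⟨if_pos hki, (hlow k hki).1⟩
      · exact Or.inr ⟨if_neg hki, (hhigh k (not_lt.1 hki) ((hS k).1 hk)).1⟩)
    (fun k hk => hmid k (not_lt.1 (mt (hS k).2 hk)))
  have hab : 1 - t + t = 1 := sub_add_cancel 1 t
  have ht₁' : 0 ≤ 1 - t := sub_nonneg.2 ht₁
  refine ⟨_, ⟨_, ⟨?_, hD hxD hzD ht₁' ht₀ hab⟩, rfl⟩, (hconv x hxD z hzD _ _ ht₁' ht₀ hab).trans
    (EReal.coe_mul_add_coe_mul_le ht₁' ht₀ hab (hzmin x hxD))⟩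
  have hyH' : (1 - t) • x + t • z ∈ H := hH ▸ hyH
  rw [hI]
  by_cases hki : (k : ℕ) < i
  · exact Or.inl (mem_iUnion₂.2 ⟨k, hki, hyH', by simpa [hki] using hyk⟩)
  · exact Or.inr (mem_iUnion₂.2
      ⟨k, ⟨not_lt.1 hki, (hS k).1 hkS⟩, hyH', by simpa [hki] using hyk⟩)

theorem stmt_5 (n : ℕ) (D : Set (Fin n → ℝ)) (hD : Convex ℝ D)
    (l u : Fin n → EReal) (f : (Fin n → ℝ) → EReal)
    (hconv : ∀ x ∈ D, ∀ y ∈ D, ∀ a b : ℝ, 0 ≤ a → 0 ≤ b → a + b = 1 →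
      f (a • x + b • y) ≤ (a : EReal) * f x + (b : EReal) * f y)
    (H : Set (Fin n → ℝ))
    (hH : H = {x | ∀ k, l k ≤ (x k : EReal) ∧ (x k : EReal) ≤ u k})
    (z : Fin n → ℝ) (hzD : z ∈ D) (hzH : z ∉ H)
    (hzmin : ∀ w ∈ D, f z ≤ f w)
    (i j : ℕ) (hij : i < j) (hjn : j ≤ n)
    (hlow : ∀ k : Fin n, (k : ℕ) < i → (z k : EReal) < l k ∧ l k ≤ u k)
    (hhigh : ∀ k : Fin n, i ≤ (k : ℕ) → (k : ℕ) < j → u k < (z k : EReal) ∧ l k ≤ u k)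
    (hmid : ∀ k : Fin n, j ≤ (k : ℕ) → l k ≤ (z k : EReal) ∧ (z k : EReal) ≤ u k)
    (I : Set (Fin n → ℝ))
    (hI : I = (⋃ k : Fin n, ⋃ _ : (k : ℕ) < i, {x ∈ H | (x k : EReal) = l k}) ∪
              (⋃ k : Fin n, ⋃ _ : i ≤ (k : ℕ) ∧ (k : ℕ) < j, {x ∈ H | (x k : EReal) = u k})) :
    sInf (f '' (H ∩ D)) = sInf (f '' (I ∩ D)) :=
  stmt_5_general n D hD l u f hconv H hH z hzD hzmin i j hij hjn hlow hhigh hmid I hI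
end

section
/- Let A ⊆ ℝⁿ be open, let f₁, f₂, h₁, h₂ : A → ℝ be continuously differentiable, and let R = {x : f₁(x) > 0, f₂(x) ≥ 0}, with C ⊆ A an n-dimensional convex set such that C ∩ R = {x : h₁(x) ≥ 0, h₂(x) ≥ 0, f₁(x) > 0, f₂(x) ≥ 0}. Assume that for every x ∈ C ∩ R with h₁(x) = 0 and every s > 0 the ball B_s(x) is not contained in C ∩ R. If x̂ ∈ R satisfies h₁(x̂) = 0, ∇h₁(x̂) ≠ 0, h₂(x̂) > 0, f₁(x̂) > 0 and f₂(x̂) > 0, then there exists r > 0 such that {x : h₁(x) = 0} ∩ B_r(x̂) = ∂C ∩ B_r(x̂). -/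
open Filter Topology in
theorem stmt_6 (n : ℕ) (A : Set (EuclideanSpace ℝ (Fin n))) (hA : IsOpen A)
    (f₁ f₂ h₁ h₂ : EuclideanSpace ℝ (Fin n) → ℝ)
    (hf₁ : ContDiffOn ℝ 1 f₁ A) (hf₂ : ContDiffOn ℝ 1 f₂ A)
    (hh₁ : ContDiffOn ℝ 1 h₁ A) (hh₂ : ContDiffOn ℝ 1 h₂ A)
    (R C : Set (EuclideanSpace ℝ (Fin n))) (hRA : R ⊆ A) (hCA : C ⊆ A)
    (hCconv : Convex ℝ C) (hCdim : (interior C).Nonempty)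
    (hR : R = {x | 0 < f₁ x ∧ 0 ≤ f₂ x})
    (hCR : C ∩ R = {x | 0 ≤ h₁ x ∧ 0 ≤ h₂ x ∧ 0 < f₁ x ∧ 0 ≤ f₂ x})
    (hass : ∀ x ∈ C ∩ R, h₁ x = 0 → ∀ s > (0 : ℝ),
      (Metric.ball x s \ (C ∩ R)).Nonempty)
    (xh : EuclideanSpace ℝ (Fin n)) (hxhR : xh ∈ R)
    (hxh1 : h₁ xh = 0) (hxhgrad : fderiv ℝ h₁ xh ≠ 0)
    (hxh2 : 0 < h₂ xh) (hxh3 : 0 < f₁ xh) (hxh4 : 0 < f₂ xh) :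
    ∃ r > (0 : ℝ),
      {x | h₁ x = 0} ∩ Metric.ball xh r = frontier C ∩ Metric.ball xh r := by
  have hxA : xh ∈ A := hRA hxhR
  have hAnx : A ∈ 𝓝 xh := hA.mem_nhds hxA
  have hcf₁ : ContinuousAt f₁ xh := hf₁.continuousOn.continuousAt hAnx
  have hcf₂ : ContinuousAt f₂ xh := hf₂.continuousOn.continuousAt hAnx
  have hch₂ : ContinuousAt h₂ xh := hh₂.continuousOn.continuousAt hAnx
  have hev : ∀ᶠ x in 𝓝 xh, x ∈ A ∧ 0 < f₁ x ∧ 0 < f₂ x ∧ 0 < h₂ x := by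
    filter_upwards [hAnx, hcf₁ (Ioi_mem_nhds hxh3), hcf₂ (Ioi_mem_nhds hxh4),
      hch₂ (Ioi_mem_nhds hxh2)] with x h1 h2 h3 h4
    exact ⟨h1, h2, h3, h4⟩
  obtain ⟨r, hr, hball⟩ := Metric.eventually_nhds_iff_ball.mp hev
  have hsubA : Metric.ball xh r ⊆ A := fun x hx => (hball x hx).1
  have hcont : ∀ x ∈ Metric.ball xh r, ContinuousAt h₁ x := fun x hx =>
    hh₁.continuousOn.continuousAt (hA.mem_nhds (hsubA hx))
  have hxR : ∀ x ∈ Metric.ball xh r, x ∈ R := fun x hx => by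
    rw [hR]; exact ⟨(hball x hx).2.1, le_of_lt (hball x hx).2.2.1⟩
  have key : ∀ x ∈ Metric.ball xh r, (x ∈ C ↔ 0 ≤ h₁ x) := by
    intro x hx
    constructor
    · intro hxC
      have hm : x ∈ C ∩ R := ⟨hxC, hxR x hx⟩
      rw [hCR] at hm
      exact hm.1
    · intro h
      have hm : x ∈ C ∩ R := by
        rw [hCR]
        exact ⟨h, le_of_lt (hball x hx).2.2.2, (hball x hx).2.1,
          le_of_lt (hball x hx).2.2.1⟩
      exact hm.1
  refine ⟨r, hr, ?_⟩
  ext x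
  simp only [Set.mem_inter_iff, Set.mem_setOf_eq]
  constructor
  · rintro ⟨hx1, hxb⟩
    refine ⟨?_, hxb⟩
    have hxC : x ∈ C := (key x hxb).mpr hx1.ge
    rw [frontier, Set.mem_diff]
    refine ⟨subset_closure hxC, ?_⟩
    intro hint
    obtain ⟨s, hs, hsub⟩ := Metric.isOpen_iff.mp isOpen_interior x hint
    set t := min s (r - dist x xh) with ht
    have htpos : 0 < t := lt_min hs (by simpa [sub_pos] using hxb)
    have htsub : Metric.ball x t ⊆ C ∩ R := by
      intro y hy
      have hy' : dist y x < t := hy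
      have hyb : y ∈ Metric.ball xh r := by
        have h1 : dist y x < r - dist x xh := lt_of_lt_of_le hy' (min_le_right _ _)
        have h2 : dist y xh ≤ dist y x + dist x xh := dist_triangle _ _ _
        have : dist y xh < r := by linarith
        exact this
      exact ⟨interior_subset (hsub (lt_of_lt_of_le hy' (min_le_left _ _))), hxR y hyb⟩
    obtain ⟨y, hy1, hy2⟩ := hass x ⟨hxC, hxR x hxb⟩ hx1 t htpos
    exact hy2 (htsub hy1)
  · rintro ⟨hxf, hxb⟩
    refine ⟨?_, hxb⟩
    rw [frontier, Set.mem_diff] at hxf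
    have hclm : x ∈ closure (Metric.ball xh r ∩ C) :=
      Metric.isOpen_ball.inter_closure ⟨hxb, hxf.1⟩
    have hne : (𝓝[Metric.ball xh r ∩ C] x).NeBot :=
      mem_closure_iff_nhdsWithin_neBot.mp hclm
    have hge : 0 ≤ h₁ x := by
      have htd : Filter.Tendsto h₁ (𝓝[Metric.ball xh r ∩ C] x) (𝓝 (h₁ x)) :=
        (hcont x hxb).continuousWithinAt
      refine ge_of_tendsto htd ?_
      filter_upwards [self_mem_nhdsWithin] with y hy
      exact (key y hy.1).mp hy.2
    have hnlt : ¬ 0 < h₁ x := by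
      intro hpos
      have hev2 : ∀ᶠ y in 𝓝 x, y ∈ C := by
        filter_upwards [(hcont x hxb) (Ioi_mem_nhds hpos),
          Metric.isOpen_ball.mem_nhds hxb] with y h1 h2
        exact (key y h2).mpr (le_of_lt h1)
      exact hxf.2 (mem_interior_iff_mem_nhds.mpr hev2)
    exact le_antisymm (not_lt.mp hnlt) hge
end

section
/- The closure of the convex hull of S₁ := {(x₁, X₁₁, z₁) ∈ ℝ³ : X₁₁ = x₁², x₁(1 − z₁) = 0, x₁ ≥ 0, z₁ ∈ {0,1}} equals {(x₁, X₁₁, z₁) : X₁₁ z₁ ≥ x₁², x₁ ≥ 0, X₁₁ ≥ 0, z₁ ∈ [0,1]}. -/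
/-!
The relaxation is closed and convex and contains S₁, so it contains the closed convex hull.
Conversely, a point (x, X, z) with x > 0 and 0 < z ≤ 1 is the convex combination
(x²/X)·(X/x, (X/x)², 1) + (z - x²/X)·(0, 0, 1) + (1 - z)·(0, 0, 0) of points of S₁.
Every point of the relaxation is a limit of such points along the segment towards (1, 1, 1).
-/

open Set

def indicatorSet : Set (ℝ × ℝ × ℝ) :=
  {p | p.2.1 = p.1 ^ 2 ∧ p.1 * (1 - p.2.2) = 0 ∧ 0 ≤ p.1 ∧ (p.2.2 = 0 ∨ p.2.2 = 1)}

def perspectiveRelaxation : Set (ℝ × ℝ × ℝ) :=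
  {p | p.2.1 * p.2.2 ≥ p.1 ^ 2 ∧ 0 ≤ p.1 ∧ 0 ≤ p.2.1 ∧ p.2.2 ∈ Icc (0 : ℝ) 1}

lemma two_mul_mul_le_of_sq_le_mul {x₁ X₁ z₁ x₂ X₂ z₂ : ℝ}
    (h₁ : x₁ ^ 2 ≤ X₁ * z₁) (h₂ : x₂ ^ 2 ≤ X₂ * z₂)
    (hX₁ : 0 ≤ X₁) (hz₁ : 0 ≤ z₁) (hX₂ : 0 ≤ X₂) (hz₂ : 0 ≤ z₂) :
    2 * x₁ * x₂ ≤ X₁ * z₂ + X₂ * z₁ := by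
  refine le_of_sq_le_sq ?_ (by positivity)
  calc (2 * x₁ * x₂) ^ 2 = 4 * x₁ ^ 2 * x₂ ^ 2 := by ring
    _ ≤ 4 * (X₁ * z₁) * (X₂ * z₂) := by gcongr
    _ = 4 * (X₁ * z₂) * (X₂ * z₁) := by ring
    _ ≤ (X₁ * z₂ + X₂ * z₁) ^ 2 := four_mul_le_sq_add _ _

lemma sq_add_le_mul_add_of_sq_le_mul {a b x₁ X₁ z₁ x₂ X₂ z₂ : ℝ} (ha : 0 ≤ a) (hb : 0 ≤ b)
    (h₁ : x₁ ^ 2 ≤ X₁ * z₁) (h₂ : x₂ ^ 2 ≤ X₂ * z₂)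
    (hX₁ : 0 ≤ X₁) (hz₁ : 0 ≤ z₁) (hX₂ : 0 ≤ X₂) (hz₂ : 0 ≤ z₂) :
    (a * x₁ + b * x₂) ^ 2 ≤ (a * X₁ + b * X₂) * (a * z₁ + b * z₂) := by
  have hcross := two_mul_mul_le_of_sq_le_mul h₁ h₂ hX₁ hz₁ hX₂ hz₂
  calc (a * x₁ + b * x₂) ^ 2 = a ^ 2 * x₁ ^ 2 + a * b * (2 * x₁ * x₂) + b ^ 2 * x₂ ^ 2 := by ring
    _ ≤ a ^ 2 * (X₁ * z₁) + a * b * (X₁ * z₂ + X₂ * z₁) + b ^ 2 * (X₂ * z₂) := by gcongr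
    _ = (a * X₁ + b * X₂) * (a * z₁ + b * z₂) := by ring

lemma convex_perspectiveRelaxation : Convex ℝ perspectiveRelaxation := by
  rintro ⟨x₁, X₁, z₁⟩ ⟨h₁, hx₁, hX₁, hz₁, hz₁'⟩ ⟨x₂, X₂, z₂⟩ ⟨h₂, hx₂, hX₂, hz₂, hz₂'⟩
    a b ha hb hab
  refine ⟨sq_add_le_mul_add_of_sq_le_mul ha hb h₁ h₂ hX₁ hz₁ hX₂ hz₂,
    add_nonneg (mul_nonneg ha hx₁) (mul_nonneg hb hx₂),
    add_nonneg (mul_nonneg ha hX₁) (mul_nonneg hb hX₂),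
    add_nonneg (mul_nonneg ha hz₁) (mul_nonneg hb hz₂), ?_⟩
  show a * z₁ + b * z₂ ≤ 1
  linarith [mul_le_of_le_one_right ha hz₁', mul_le_of_le_one_right hb hz₂']

lemma isClosed_perspectiveRelaxation : IsClosed perspectiveRelaxation := by
  simp only [perspectiveRelaxation, ge_iff_le, mem_Icc, ofPred_and]
  refine .inter ?_ (.inter ?_ (.inter ?_ (.inter ?_ ?_))) <;>
    exact isClosed_le (by fun_prop) (by fun_prop)

lemma indicatorSet_subset_perspectiveRelaxation : indicatorSet ⊆ perspectiveRelaxation := by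
  rintro ⟨x, X, z⟩ ⟨hX, hxz, hx, hz⟩
  simp only at hX hxz hx hz
  subst hX
  rcases hz with rfl | rfl
  · obtain rfl : x = 0 := by simpa using hxz
    simp [perspectiveRelaxation]
  · simp [perspectiveRelaxation, hx]

lemma mem_convexHull_indicatorSet {x X z : ℝ} (hx : 0 < x) (hz : 0 < z) (hz₁ : z ≤ 1)
    (h : x ^ 2 ≤ X * z) : (x, X, z) ∈ convexHull ℝ indicatorSet := by
  have hX : 0 < X := pos_of_mul_pos_left ((pow_pos hx 2).trans_le h) hz.le
  have hull := convex_convexHull ℝ indicatorSet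
  have mem {p} (hp : p ∈ indicatorSet) := subset_convexHull ℝ indicatorSet hp
  set c := X / x
  set t := x ^ 2 / (X * z)
  have ht : t ≤ 1 := (div_le_one (by positivity)).2 h
  have hq : (x / z, X / z, (1 : ℝ)) ∈ convexHull ℝ indicatorSet := by
    convert hull (mem (p := (c, c ^ 2, 1)) ⟨rfl, by ring, by positivity, .inr rfl⟩)
      (mem (p := (0, 0, 1)) ⟨by ring, by ring, le_rfl, .inr rfl⟩)
      (by positivity : 0 ≤ t) (sub_nonneg.2 ht) (add_sub_cancel t 1) using 1
    simp only [Prod.smul_mk, smul_eq_mul, Prod.mk_add_mk, Prod.mk.injEq, c, t]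
    refine ⟨by field_simp; ring, by field_simp; ring, by ring⟩
  convert hull hq (mem (p := (0, 0, 0)) ⟨by ring, by ring, le_rfl, .inl rfl⟩)
    hz.le (sub_nonneg.2 hz₁) (add_sub_cancel z 1) using 1
  simp only [Prod.smul_mk, smul_eq_mul, Prod.mk_add_mk, Prod.mk.injEq]
  refine ⟨by field_simp; ring, by field_simp; ring, by ring⟩

lemma perspectiveRelaxation_subset_closure_convexHull :
    perspectiveRelaxation ⊆ closure (convexHull ℝ indicatorSet) := by
  intro p hp
  have hq : ((1, 1, 1) : ℝ × ℝ × ℝ) ∈ perspectiveRelaxation := by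
    norm_num [perspectiveRelaxation]
  refine closure_mono ?_ (segment_subset_closure_openSegment (left_mem_segment ℝ p (1, 1, 1)))
  rintro _ ⟨a, b, ha, hb, hab, rfl⟩
  obtain ⟨h, -, -, -, hz₁⟩ := convex_perspectiveRelaxation hp hq ha.le hb.le hab
  obtain ⟨x, X, z⟩ := p
  obtain ⟨-, hx, -, hz, -⟩ := hp
  simp only [Prod.smul_mk, smul_eq_mul, Prod.mk_add_mk, mul_one] at h hz₁ ⊢
  exact mem_convexHull_indicatorSet (by positivity) (by positivity) hz₁ h

theorem stmt_8 :
    closure (convexHull ℝ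
        {p : ℝ × ℝ × ℝ | p.2.1 = p.1 ^ 2 ∧ p.1 * (1 - p.2.2) = 0 ∧
          0 ≤ p.1 ∧ (p.2.2 = 0 ∨ p.2.2 = 1)}) =
      {p : ℝ × ℝ × ℝ | p.2.1 * p.2.2 ≥ p.1 ^ 2 ∧ 0 ≤ p.1 ∧ 0 ≤ p.2.1 ∧
        p.2.2 ∈ Set.Icc (0 : ℝ) 1} := by
  show closure (convexHull ℝ indicatorSet) = perspectiveRelaxation
  refine (closure_minimal ?_ isClosed_perspectiveRelaxation).antisymm
    perspectiveRelaxation_subset_closure_convexHull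
  exact convexHull_min indicatorSet_subset_perspectiveRelaxation convex_perspectiveRelaxation
end

section
/- Let P₄ := {(x₁,x₂,X₁₁,X₁₂,X₂₂) : X₁₁ = x₁², X₁₂ = x₁x₂, X₂₂ = x₂², x₁ ≥ 0, x₂ ≥ 0}. Then the closure of the convex hull of P₄ equals the set of (x₁,x₂,X₁₁,X₁₂,X₂₂) with X₁₂ ≥ 0, x₁ ≥ 0, x₂ ≥ 0 such that the 3×3 matrix with rows (1, x₁, x₂), (x₁, X₁₁, X₁₂), (x₂, X₁₂, X₂₂) is positive semidefinite. -/
/-!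
A point `p = (a, b, X, Y, Z)` of the right-hand side has a positive semidefinite Schur complement
`[[X - a², Y - ab], [Y - ab, Z - b²]]`. If `Y ≥ ab`, this complement is an entrywise nonnegative
PSD `2 × 2` matrix, hence a sum of two matrices `w wᵀ` with `w ≥ 0`, and these are recession
directions of the closed convex hull: `(1 - τ²) q + τ² · moment (w / τ)` tends to `q + (0, w wᵀ)`
as `τ → 0`. If `Y < ab`, then `p` is an explicit convex combination of `moment a b`, one moment
point on each axis and `0`; the weights fit into the simplex exactly because of the determinant
inequality for the Schur complement. Conversely, the right-hand side is closed and convex, and it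
contains each moment point since `momentMatrix (moment x y) = v vᵀ` with `v = (1, x, y)`.
-/

open Matrix Filter Topology

def nonnegMoments : Set (ℝ × ℝ × ℝ × ℝ × ℝ) :=
  {p | p.2.2.1 = p.1 ^ 2 ∧ p.2.2.2.1 = p.1 * p.2.1 ∧ p.2.2.2.2 = p.2.1 ^ 2 ∧ 0 ≤ p.1 ∧ 0 ≤ p.2.1}

def moment (x y : ℝ) : ℝ × ℝ × ℝ × ℝ × ℝ := (x, y, x ^ 2, x * y, y ^ 2)

def momentMatrix (p : ℝ × ℝ × ℝ × ℝ × ℝ) : Matrix (Fin 3) (Fin 3) ℝ :=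
  !![1, p.1, p.2.1; p.1, p.2.2.1, p.2.2.2.1; p.2.1, p.2.2.2.1, p.2.2.2.2]

def dnnMoments : Set (ℝ × ℝ × ℝ × ℝ × ℝ) :=
  {p | 0 ≤ p.2.2.2.1 ∧ 0 ≤ p.1 ∧ 0 ≤ p.2.1 ∧ (momentMatrix p).PosSemidef}

lemma moment_mem_nonnegMoments {x y : ℝ} (hx : 0 ≤ x) (hy : 0 ≤ y) :
    moment x y ∈ nonnegMoments :=
  ⟨rfl, rfl, rfl, hx, hy⟩

lemma momentMatrix_isHermitian (p : ℝ × ℝ × ℝ × ℝ × ℝ) : (momentMatrix p).IsHermitian := by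
  ext i j
  fin_cases i <;> fin_cases j <;> rfl

lemma momentMatrix_moment (x y : ℝ) :
    momentMatrix (moment x y) = vecMulVec ![1, x, y] ![1, x, y] := by
  ext i j
  fin_cases i <;> fin_cases j <;> simp [momentMatrix, moment, vecMulVec, sq, mul_comm]

lemma momentMatrix_smul_add_smul (p q : ℝ × ℝ × ℝ × ℝ × ℝ) {α β : ℝ} (h : α + β = 1) :
    momentMatrix (α • p + β • q) = α • momentMatrix p + β • momentMatrix q := by
  ext i j
  fin_cases i <;> fin_cases j <;> simp [momentMatrix, h]

lemma dotProduct_momentMatrix_mulVec (a b X Y Z : ℝ) (v : Fin 3 → ℝ) :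
    star v ⬝ᵥ (momentMatrix (a, b, X, Y, Z) *ᵥ v) =
      (v 0 + a * v 1 + b * v 2) ^ 2 + (X - a ^ 2) * v 1 ^ 2 + 2 * (Y - a * b) * v 1 * v 2 +
        (Z - b ^ 2) * v 2 ^ 2 := by
  simp [momentMatrix, dotProduct, mulVec, Fin.sum_univ_three]
  ring

lemma continuous_dotProduct_momentMatrix_mulVec (v : Fin 3 → ℝ) :
    Continuous fun p => star v ⬝ᵥ (momentMatrix p *ᵥ v) := by
  unfold momentMatrix
  fun_prop

lemma convex_dnnMoments : Convex ℝ dnnMoments := by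
  rintro p ⟨hY, hx, hy, hM⟩ q ⟨hY', hx', hy', hM'⟩ α β hα hβ hαβ
  have hM'' : (momentMatrix (α • p + β • q)).PosSemidef := by
    rw [momentMatrix_smul_add_smul p q hαβ]
    exact (hM.smul hα).add (hM'.smul hβ)
  refine ⟨?_, ?_, ?_, hM''⟩ <;>
    simp only [Prod.fst_add, Prod.snd_add, Prod.smul_fst, Prod.smul_snd, smul_eq_mul] <;>
    positivity

lemma isClosed_dnnMoments : IsClosed dnnMoments := by
  have h : dnnMoments = {p | 0 ≤ p.2.2.2.1} ∩ {p | 0 ≤ p.1} ∩ {p | 0 ≤ p.2.1} ∩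
      ⋂ v : Fin 3 → ℝ, {p | 0 ≤ star v ⬝ᵥ (momentMatrix p *ᵥ v)} := by
    ext p
    simp only [dnnMoments, posSemidef_iff_dotProduct_mulVec, momentMatrix_isHermitian, true_and,
      Set.mem_inter_iff, Set.mem_iInter, Set.mem_ofPred_eq, and_assoc]
  rw [h]
  refine (((isClosed_le continuous_const (by fun_prop)).inter
    (isClosed_le continuous_const (by fun_prop))).inter
    (isClosed_le continuous_const (by fun_prop))).inter
    (isClosed_iInter fun v => isClosed_le continuous_const ?_)
  exact continuous_dotProduct_momentMatrix_mulVec v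

lemma nonnegMoments_subset_dnnMoments : nonnegMoments ⊆ dnnMoments := by
  rintro ⟨x, y, X, Y, Z⟩ ⟨hX, hY, hZ, hx, hy⟩
  dsimp only at hX hY hZ hx hy
  subst hX hY hZ
  refine ⟨mul_nonneg hx hy, hx, hy, ?_⟩
  have h := posSemidef_vecMulVec_self_star ![1, x, y]
  rwa [star_trivial, ← momentMatrix_moment] at h

lemma closure_convexHull_nonnegMoments_subset :
    closure (convexHull ℝ nonnegMoments) ⊆ dnnMoments :=
  closure_minimal (convexHull_min nonnegMoments_subset_dnnMoments convex_dnnMoments)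
    isClosed_dnnMoments

lemma schur_nonneg_of_posSemidef_momentMatrix {a b X Y Z : ℝ}
    (h : (momentMatrix (a, b, X, Y, Z)).PosSemidef) :
    0 ≤ X - a ^ 2 ∧ 0 ≤ Z - b ^ 2 ∧ (Y - a * b) ^ 2 ≤ (X - a ^ 2) * (Z - b ^ 2) := by
  have hq (k l : ℝ) : 0 ≤ (X - a ^ 2) * k ^ 2 + 2 * (Y - a * b) * k * l + (Z - b ^ 2) * l ^ 2 := by
    have := h.dotProduct_mulVec_nonneg ![-(a * k + b * l), k, l]
    rw [dotProduct_momentMatrix_mulVec] at this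
    simpa using this
  refine ⟨by simpa using hq 1 0, by simpa using hq 0 1, ?_⟩
  have hd := discrim_le_zero (a := X - a ^ 2) (b := 2 * (Y - a * b)) (c := Z - b ^ 2)
    fun k => (hq k 1).trans_eq (by ring)
  rw [discrim] at hd
  linarith

lemma add_rankOne_mem_closure_convexHull {q : ℝ × ℝ × ℝ × ℝ × ℝ}
    (hq : q ∈ closure (convexHull ℝ nonnegMoments)) {w₁ w₂ : ℝ} (h₁ : 0 ≤ w₁) (h₂ : 0 ≤ w₂) :
    q + (0, 0, w₁ ^ 2, w₁ * w₂, w₂ ^ 2) ∈ closure (convexHull ℝ nonnegMoments) := by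
  set C := closure (convexHull ℝ nonnegMoments)
  have hC : Convex ℝ C := (convex_convexHull ℝ _).closure
  set f : ℝ → ℝ × ℝ × ℝ × ℝ × ℝ := fun τ =>
    (1 - τ ^ 2) • q + (τ * w₁, τ * w₂, w₁ ^ 2, w₁ * w₂, w₂ ^ 2)
  have hfC : ∀ τ ∈ Set.Ioo (0 : ℝ) 1, f τ ∈ C := by
    rintro τ ⟨hτ₀, hτ₁⟩
    have hm : moment (w₁ / τ) (w₂ / τ) ∈ C := subset_closure <| subset_convexHull ℝ _ <|
      moment_mem_nonnegMoments (by positivity) (by positivity)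
    convert hC hq hm (by nlinarith : 0 ≤ 1 - τ ^ 2) (sq_nonneg τ) (sub_add_cancel 1 _) using 2
    simp only [moment, Prod.smul_mk, smul_eq_mul]
    refine Prod.ext ?_ (Prod.ext ?_ (Prod.ext ?_ (Prod.ext ?_ ?_))) <;> field_simp
  have hf : Tendsto f (𝓝[>] 0) (𝓝 (f 0)) :=
    (Continuous.tendsto (by fun_prop) 0).mono_left nhdsWithin_le_nhds
  have h0 : f 0 = q + (0, 0, w₁ ^ 2, w₁ * w₂, w₂ ^ 2) := by simp [f]
  rw [← h0]
  exact isClosed_closure.mem_of_tendsto hf (eventually_of_mem (Ioo_mem_nhdsGT one_pos) hfC)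

lemma exists_nonneg_cholesky {s t u : ℝ} (hs : 0 ≤ s) (hu : 0 ≤ u) (ht : 0 ≤ t)
    (htsu : t ^ 2 ≤ s * u) :
    ∃ r y z : ℝ, 0 ≤ r ∧ 0 ≤ y ∧ 0 ≤ z ∧ s = r ^ 2 ∧ t = r * y ∧ u = y ^ 2 + z ^ 2 := by
  obtain rfl | hs₀ := hs.eq_or_lt
  · refine ⟨0, 0, √u, le_rfl, le_rfl, Real.sqrt_nonneg u, by ring, by nlinarith, ?_⟩
    rw [Real.sq_sqrt hu]
    ring
  · have hr : 0 < √s := Real.sqrt_pos.mpr hs₀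
    have hy : (t / √s) ^ 2 ≤ u := by
      rw [div_pow, Real.sq_sqrt hs, div_le_iff₀ hs₀]
      linarith
    refine ⟨√s, t / √s, √(u - (t / √s) ^ 2), hr.le, by positivity, Real.sqrt_nonneg _,
      (Real.sq_sqrt hs).symm, by field_simp, ?_⟩
    rw [Real.sq_sqrt (sub_nonneg.mpr hy)]
    ring

lemma mem_closure_convexHull_of_schur_nonneg {a b s t u : ℝ} (ha : 0 ≤ a) (hb : 0 ≤ b)
    (hs : 0 ≤ s) (hu : 0 ≤ u) (ht : 0 ≤ t) (htsu : t ^ 2 ≤ s * u) :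
    (a, b, a ^ 2 + s, a * b + t, b ^ 2 + u) ∈ closure (convexHull ℝ nonnegMoments) := by
  obtain ⟨r, y, z, hr, hy, hz, rfl, rfl, rfl⟩ := exists_nonneg_cholesky hs hu ht htsu
  have hm : moment a b ∈ closure (convexHull ℝ nonnegMoments) :=
    subset_closure <| subset_convexHull ℝ _ <| moment_mem_nonnegMoments ha hb
  convert add_rankOne_mem_closure_convexHull (add_rankOne_mem_closure_convexHull hm hr hy)
    le_rfl hz using 1
  simp only [moment, Prod.mk_add_mk]
  refine Prod.ext ?_ (Prod.ext ?_ (Prod.ext ?_ (Prod.ext ?_ ?_))) <;> ring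

lemma mem_convexHull_of_schur_neg {a b s u c : ℝ} (ha : 0 ≤ a) (hb : 0 ≤ b) (hs : 0 ≤ s)
    (hc : 0 < c) (hcab : c ≤ a * b) (hcsu : c ^ 2 ≤ s * u) :
    (a, b, a ^ 2 + s, a * b - c, b ^ 2 + u) ∈ convexHull ℝ nonnegMoments := by
  have hab : 0 < a * b := hc.trans_le hcab
  have ha : 0 < a := lt_of_le_of_ne ha (by rintro rfl; simp at hab)
  have hb : 0 < b := lt_of_le_of_ne hb (by rintro rfl; simp at hab)
  have hu : 0 ≤ u := by nlinarith
  have hα : 0 < a * c + s * b := by positivity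
  have hβ : 0 < b * c + u * a := by positivity
  set w₁ := c ^ 2 / (b * (a * c + s * b))
  set w₂ := c ^ 2 / (a * (b * c + u * a))
  have hw : w₁ + w₂ ≤ c / (a * b) := by
    rw [div_add_div _ _ (by positivity) (by positivity), div_le_div_iff₀ (by positivity) hab]
    nlinarith [mul_nonneg (mul_nonneg hc.le (mul_nonneg hab.le hab.le)) (sub_nonneg.2 hcsu)]
  have hsum : (a, b, a ^ 2 + s, a * b - c, b ^ 2 + u) =
      ∑ i : Fin 4, ![1 - c / (a * b), w₁, w₂, c / (a * b) - w₁ - w₂] i •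
        ![moment a b, moment ((a * c + s * b) / c) 0, moment 0 ((b * c + u * a) / c),
          moment 0 0] i := by
    simp only [w₁, w₂, Fin.sum_univ_four, cons_val_zero, cons_val_one, cons_val, moment,
      Prod.smul_mk, smul_eq_mul, Prod.mk_add_mk]
    refine Prod.ext ?_ (Prod.ext ?_ (Prod.ext ?_ (Prod.ext ?_ ?_))) <;> field_simp <;> ring
  rw [hsum]
  refine (convex_convexHull ℝ _).sum_mem (fun i _ => ?_) ?_ (fun i _ => ?_)
  · have hw₀ : 0 ≤ 1 - c / (a * b) := sub_nonneg.mpr ((div_le_one hab).mpr hcab)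
    have hw₁ : 0 ≤ w₁ := by positivity
    have hw₂ : 0 ≤ w₂ := by positivity
    have hw₃ : 0 ≤ c / (a * b) - w₁ - w₂ := by linarith
    fin_cases i
    exacts [hw₀, hw₁, hw₂, hw₃]
  · simp [Fin.sum_univ_four]
  · fin_cases i <;>
      exact subset_convexHull ℝ _ (moment_mem_nonnegMoments (by positivity) (by positivity))

theorem stmt_9 :
    closure (convexHull ℝ
        {p : ℝ × ℝ × ℝ × ℝ × ℝ | p.2.2.1 = p.1 ^ 2 ∧ p.2.2.2.1 = p.1 * p.2.1 ∧
          p.2.2.2.2 = p.2.1 ^ 2 ∧ 0 ≤ p.1 ∧ 0 ≤ p.2.1}) =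
      {p : ℝ × ℝ × ℝ × ℝ × ℝ | 0 ≤ p.2.2.2.1 ∧ 0 ≤ p.1 ∧ 0 ≤ p.2.1 ∧
        (!![1, p.1, p.2.1; p.1, p.2.2.1, p.2.2.2.1; p.2.1, p.2.2.2.1, p.2.2.2.2] :
          Matrix (Fin 3) (Fin 3) ℝ).PosSemidef} := by
  show closure (convexHull ℝ nonnegMoments) = dnnMoments
  refine closure_convexHull_nonnegMoments_subset.antisymm ?_
  rintro ⟨a, b, X, Y, Z⟩ ⟨hY, ha, hb, hM⟩
  obtain ⟨hs, hu, htsu⟩ := schur_nonneg_of_posSemidef_momentMatrix hM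
  rcases le_or_gt 0 (Y - a * b) with ht | ht
  · have h := mem_closure_convexHull_of_schur_nonneg ha hb hs hu ht htsu
    rwa [add_sub_cancel, add_sub_cancel, add_sub_cancel] at h
  · have h := mem_convexHull_of_schur_neg (u := Z - b ^ 2) (c := a * b - Y) ha hb hs
      (by linarith) (by linarith) (by nlinarith)
    rw [add_sub_cancel, add_sub_cancel, sub_sub_cancel] at h
    exact subset_closure h
end

section
/- Let z₁, z₂ ∈ (0,1], x₁, x₂ > 0, X₁₂ > 0, X₂₂ ∈ ℝ with z₁ ≤ z₂, and suppose X₂₂z₂ ≥ x₂², X₁₂z₂ > x₁x₂, X₁₂z₁ ≤ x₁x₂, and X₁₂x₂ ≤ X₂₂x₁. If additionally x₁²(z₂ − z₁)X₂₂ < X₁₂²z₁z₂ − 2X₁₂x₁x₂z₁ + (x₁x₂)², then a contradiction follows; i.e., the system of all these inequalities is infeasible. -/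
theorem stmt_13 (z₁ z₂ x₁ x₂ X₁₂ X₂₂ : ℝ)
    (hz₁ : z₁ ∈ Set.Ioc (0 : ℝ) 1) (hz₂ : z₂ ∈ Set.Ioc (0 : ℝ) 1)
    (hx₁ : 0 < x₁) (hx₂ : 0 < x₂) (hX₁₂ : 0 < X₁₂) (hz : z₁ ≤ z₂)
    (h1 : X₂₂ * z₂ ≥ x₂ ^ 2) (h2 : X₁₂ * z₂ > x₁ * x₂) (h3 : X₁₂ * z₁ ≤ x₁ * x₂)
    (h4 : X₁₂ * x₂ ≤ X₂₂ * x₁)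
    (h5 : x₁ ^ 2 * (z₂ - z₁) * X₂₂ <
      X₁₂ ^ 2 * z₁ * z₂ - 2 * X₁₂ * x₁ * x₂ * z₁ + (x₁ * x₂) ^ 2) :
    False := by
  have hX₂₂ : 0 < X₂₂ := by nlinarith
  nlinarith [mul_nonneg (sub_nonneg.2 h3) (le_of_lt (sub_pos.2 h2)),
    mul_nonneg (mul_nonneg (sub_nonneg.2 hz) hx₁.le) (sub_nonneg.2 h4)]
end

section
/- Let z₁, z₂ ∈ (0,1], x₁, x₂ > 0, X₁₂ > 0, X₂₂ ∈ ℝ with z₁ ≤ z₂, X₂₂z₂ ≥ x₂², X₁₂z₂ > x₁x₂, X₁₂z₁ > x₁x₂, X₁₂x₂ > x₁X₂₂. Then x₁²(z₂ − z₁)X₂₂ < X₁₂²z₁z₂ − 2X₁₂x₁x₂z₁ + (x₁x₂)². -/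
theorem stmt_14 (z₁ z₂ x₁ x₂ X₁₂ X₂₂ : ℝ)
    (hz₁ : z₁ ∈ Set.Ioc (0 : ℝ) 1) (hz₂ : z₂ ∈ Set.Ioc (0 : ℝ) 1)
    (hx₁ : 0 < x₁) (hx₂ : 0 < x₂) (hX₁₂ : 0 < X₁₂) (hz : z₁ ≤ z₂)
    (h1 : X₂₂ * z₂ ≥ x₂ ^ 2) (h2 : X₁₂ * z₂ > x₁ * x₂) (h3 : X₁₂ * z₁ > x₁ * x₂)
    (h4 : X₁₂ * x₂ > x₁ * X₂₂) :
    x₁ ^ 2 * (z₂ - z₁) * X₂₂ <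
      X₁₂ ^ 2 * z₁ * z₂ - 2 * X₁₂ * x₁ * x₂ * z₁ + (x₁ * x₂) ^ 2 := by
  obtain ⟨hz1p, _⟩ := hz₁
  nlinarith [mul_pos (sub_pos.2 h3) (sub_pos.2 h2), mul_le_mul_of_nonneg_left (le_of_lt h4) (mul_nonneg hx₁.le (sub_nonneg.2 hz)), mul_pos hx₁ hx₂]
end

section
/- Let z₁, z₂ ∈ (0,1] with z₂ ≤ z₁, x₁, x₂ ≥ 0, X₁₂ > 0, X₂₂ with X₂₂z₂ ≥ x₂². If X₁₂z₁ > x₁x₂ and X₁₂x₂ > x₁X₂₂ then X₁₂z₂ > x₁x₂ is impossible to fail; i.e., the system X₁₂z₁ > x₁x₂, X₁₂x₂ > x₁X₂₂, X₁₂z₂ ≤ x₁x₂, X₂₂z₂ ≥ x₂² is infeasible. -/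
theorem stmt_15 (z₁ z₂ x₁ x₂ X₁₂ X₂₂ : ℝ)
    (hz₁ : z₁ ∈ Set.Ioc (0 : ℝ) 1) (hz₂ : z₂ ∈ Set.Ioc (0 : ℝ) 1)
    (hz : z₂ ≤ z₁) (hx₁ : 0 ≤ x₁) (hx₂ : 0 ≤ x₂) (hX₁₂ : 0 < X₁₂)
    (h1 : X₂₂ * z₂ ≥ x₂ ^ 2) (h2 : X₁₂ * z₁ > x₁ * x₂)
    (h3 : X₁₂ * x₂ > x₁ * X₂₂) (h4 : X₁₂ * z₂ ≤ x₁ * x₂) :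
    False := by
  obtain ⟨hz2pos, _⟩ := hz₂
  nlinarith [mul_le_mul_of_nonneg_right h4 hx₂, mul_lt_mul_of_pos_right h3 hz2pos, mul_le_mul_of_nonneg_left h1 hx₁]
end

section
/- Let z₁, z₂ ∈ (0,1) with z₁ + z₂ > 1, let x₁, x₂ > 0, X₁₂ > 0, X₂₂ satisfy X₁₂z₁z₂ < x₁x₂(z₁ + z₂ − 1) and X₂₂z₂ ≥ x₂². If (1 − z₁)(z₁ + z₂ − 1)x₁²(X₂₂z₂ − x₂²) ≤ (X₁₂z₁z₂ − x₁x₂(z₁ + z₂ − 1))², then x₂² > X₂₂(1 − z₁). -/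
theorem stmt_16 (z₁ z₂ x₁ x₂ X₁₂ X₂₂ : ℝ)
    (hz₁ : z₁ ∈ Set.Ioo (0 : ℝ) 1) (hz₂ : z₂ ∈ Set.Ioo (0 : ℝ) 1)
    (hzz : 1 < z₁ + z₂) (hx₁ : 0 < x₁) (hx₂ : 0 < x₂) (hX₁₂ : 0 < X₁₂)
    (h1 : X₁₂ * z₁ * z₂ < x₁ * x₂ * (z₁ + z₂ - 1)) (h2 : X₂₂ * z₂ ≥ x₂ ^ 2)
    (h3 : (1 - z₁) * (z₁ + z₂ - 1) * x₁ ^ 2 * (X₂₂ * z₂ - x₂ ^ 2) ≤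
      (X₁₂ * z₁ * z₂ - x₁ * x₂ * (z₁ + z₂ - 1)) ^ 2) :
    x₂ ^ 2 > X₂₂ * (1 - z₁) := by
  obtain ⟨hz₁0, hz₁1⟩ := hz₁
  obtain ⟨hz₂0, hz₂1⟩ := hz₂
  have hD : 0 < x₁ * x₂ * (z₁ + z₂ - 1) - X₁₂ * z₁ * z₂ := by linarith
  have hP : 0 < X₁₂ * z₁ * z₂ := by positivity
  have hsq : (X₁₂ * z₁ * z₂ - x₁ * x₂ * (z₁ + z₂ - 1)) ^ 2 <
      (x₁ * x₂ * (z₁ + z₂ - 1)) ^ 2 := by nlinarith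
  have key : (1 - z₁) * (z₁ + z₂ - 1) * x₁ ^ 2 * (X₂₂ * z₂ - x₂ ^ 2) <
      (x₁ * x₂ * (z₁ + z₂ - 1)) ^ 2 := lt_of_le_of_lt h3 hsq
  have hx₁2 : 0 < x₁ ^ 2 := by positivity
  nlinarith [mul_pos (mul_pos hx₁2 (by linarith : (0:ℝ) < z₁ + z₂ - 1)) hz₂0,
    mul_pos hx₁2 (by linarith : (0:ℝ) < z₁ + z₂ - 1)]
end

section
/- Let C₁, …, C_m ⊆ ℝⁿ be nonempty convex sets and C₀ := conv(C₁ ∪ ⋯ ∪ C_m). Then ri(C₀) = ⋃ { λ₁·ri(C₁) + ⋯ + λ_m·ri(C_m) : λᵢ > 0 for all i, Σλᵢ = 1 }, where ri denotes relative interior and the sum is a Minkowski sum of scaled sets. -/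
/-!
In finite dimension, a point `x` of a convex set `S` lies in `ri S` iff every segment from a
point of `S` to `x` can be prolonged beyond `x` inside `S` (Rockafellar, Theorem 6.4). The hull
`S = conv (⋃ Cᵢ)` consists of the sums `∑ νᵢ zᵢ` with `ν` in the standard simplex and `zᵢ ∈ Cᵢ`.

If `x ∈ ri S`, prolong the segment from a point `e = ∑ λᵢ yᵢ` (`λᵢ > 0`, `yᵢ ∈ ri Cᵢ`) beyond `x`
to some `q = ∑ νᵢ zᵢ ∈ S`. Then `x = a e + b q` with `a > 0`, and regrouping index by index gives
`x = ∑ μᵢ yᵢ'` with `μᵢ = a λᵢ + b νᵢ > 0` and `yᵢ' ∈ [yᵢ, zᵢ)`, a point of `ri Cᵢ`.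

Conversely, let `x = ∑ λᵢ yᵢ` and `z = ∑ νᵢ wᵢ ∈ S`. Then
`x + t (x - z) = ∑ cᵢ(t) (yᵢ + rᵢ(t) (yᵢ - wᵢ))` with `cᵢ(t) = (1 + t) λᵢ - t νᵢ → λᵢ > 0` and
`rᵢ(t) = t νᵢ / cᵢ(t) → 0`, so for small `t > 0` every bracket stays in `Cᵢ` since `yᵢ ∈ ri Cᵢ`.
-/

open Set Filter Topology Finset

section IntrinsicInterior

theorem mem_intrinsicInterior_iff_mem_nhdsWithin {𝕜 V P : Type*} [Ring 𝕜] [AddCommGroup V]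
    [Module 𝕜 V] [TopologicalSpace P] [AddTorsor V P] {s : Set P} {x : P} :
    x ∈ intrinsicInterior 𝕜 s ↔
      x ∈ affineSpan 𝕜 s ∧ s ∈ 𝓝[(affineSpan 𝕜 s : Set P)] x := by
  constructor
  · rintro ⟨y, hy, rfl⟩
    exact ⟨y.2, preimage_coe_mem_nhds_subtype.1 (mem_interior_iff_mem_nhds.1 hy)⟩
  · rintro ⟨hx, hs⟩
    exact ⟨⟨x, hx⟩, mem_interior_iff_mem_nhds.2 (preimage_coe_mem_nhds_subtype.2 hs), rfl⟩

variable {E : Type*} [AddCommGroup E] [Module ℝ E] [TopologicalSpace E]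
  [IsTopologicalAddGroup E] [ContinuousSMul ℝ E] {s : Set E} {x y z : E}

theorem eventually_add_smul_sub_mem_of_mem_intrinsicInterior {α : Type*} {l : Filter α}
    {r : α → ℝ} (hy : y ∈ intrinsicInterior ℝ s) (hz : z ∈ affineSpan ℝ s)
    (hr : Tendsto r l (𝓝 0)) : ∀ᶠ a in l, y + r a • (y - z) ∈ s := by
  obtain ⟨hyA, hs⟩ := mem_intrinsicInterior_iff_mem_nhdsWithin.1 hy
  have hline : Tendsto (fun a => y + r a • (y - z)) l (𝓝[(affineSpan ℝ s : Set E)] y) := by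
    refine tendsto_nhdsWithin_iff.2 ⟨?_, Eventually.of_forall fun a => ?_⟩
    · simpa using tendsto_const_nhds.add (hr.smul_const (y - z))
    · simpa [add_comm] using AffineSubspace.smul_vsub_vadd_mem _ (r a) hyA hz hyA
  exact hline hs

theorem Convex.combo_intrinsicInterior_self_mem_intrinsicInterior (hs : Convex ℝ s)
    (hx : x ∈ intrinsicInterior ℝ s) (hy : y ∈ s) {a b : ℝ} (ha : 0 < a) (hb : 0 ≤ b)
    (hab : a + b = 1) : a • x + b • y ∈ intrinsicInterior ℝ s := by
  obtain ⟨hxA, hxs⟩ := mem_intrinsicInterior_iff_mem_nhdsWithin.1 hx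
  have hpA : a • x + b • y ∈ affineSpan ℝ s :=
    (affineSpan ℝ s).convex hxA (subset_affineSpan ℝ s hy) ha.le hb hab
  refine mem_intrinsicInterior_iff_mem_nhdsWithin.2 ⟨hpA, ?_⟩
  -- the homothety of centre `y` and ratio `a` maps `x` to `a • x + b • y`: pull neighbourhoods back
  have hg : Tendsto (fun w => x + a⁻¹ • (w - (a • x + b • y)))
      (𝓝[(affineSpan ℝ s : Set E)] (a • x + b • y)) (𝓝[(affineSpan ℝ s : Set E)] x) := by
    refine tendsto_nhdsWithin_iff.2 ⟨?_, eventually_nhdsWithin_of_forall fun w hw => ?_⟩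
    · exact ((continuous_const.add (continuous_const.smul (continuous_id.sub continuous_const))
        ).tendsto' _ x (by simp)).mono_left nhdsWithin_le_nhds
    · simpa [add_comm] using AffineSubspace.smul_vsub_vadd_mem _ a⁻¹ hw hpA hxA
  filter_upwards [hg hxs] with w hw
  have hw_eq : w = a • (x + a⁻¹ • (w - (a • x + b • y))) + b • y := by
    rw [smul_add, smul_smul, mul_inv_cancel₀ ha.ne', one_smul]
    module
  rw [hw_eq]
  exact hs hw hy ha.le hb hab

end IntrinsicInterior

theorem mem_openSegment_add_smul_sub {E : Type*} [AddCommGroup E] [Module ℝ E] (x z : E)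
    {t : ℝ} (ht : 0 < t) : x ∈ openSegment ℝ z (x + t • (x - z)) :=
  ⟨t / (1 + t), 1 / (1 + t), by positivity, by positivity, by field_simp; ring, by
    match_scalars <;> field_simp; ring⟩

theorem Convex.mem_intrinsicInterior_iff_forall_mem_openSegment {E : Type*}
    [NormedAddCommGroup E] [NormedSpace ℝ E] [FiniteDimensional ℝ E] {s : Set E} {x : E}
    (hs : Convex ℝ s) :
    x ∈ intrinsicInterior ℝ s ↔ x ∈ s ∧ ∀ z ∈ s, ∃ q ∈ s, x ∈ openSegment ℝ z q := by
  constructor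
  · intro hx
    refine ⟨intrinsicInterior_subset hx, fun z hz => ?_⟩
    obtain ⟨t, hq, ht⟩ := ((eventually_add_smul_sub_mem_of_mem_intrinsicInterior hx
      (subset_affineSpan ℝ s hz) (tendsto_id.mono_left nhdsWithin_le_nhds)).and
      (self_mem_nhdsWithin (s := Ioi 0))).exists
    exact ⟨_, hq, mem_openSegment_add_smul_sub x z ht⟩
  · rintro ⟨hxs, hseg⟩
    obtain ⟨z, hz⟩ := Set.Nonempty.intrinsicInterior hs ⟨x, hxs⟩
    obtain ⟨q, hq, a, b, ha, hb, hab, rfl⟩ := hseg z (intrinsicInterior_subset hz)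
    exact hs.combo_intrinsicInterior_self_mem_intrinsicInterior hz hq ha hb.le hab

theorem convexHull_iUnion {ι E : Type*} [Fintype ι] [AddCommGroup E] [Module ℝ E]
    {C : ι → Set E} (hne : ∀ i, (C i).Nonempty) (hconv : ∀ i, Convex ℝ (C i)) :
    convexHull ℝ (⋃ i, C i) = {x | ∃ ν : ι → ℝ, (∀ i, 0 ≤ ν i) ∧ ∑ i, ν i = 1 ∧
      ∃ z : ι → E, (∀ i, z i ∈ C i) ∧ x = ∑ i, ν i • z i} := by
  classical
  refine (convexHull_min (fun x hx => ?_) ?_).antisymm ?_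
  · obtain ⟨j, hj⟩ := mem_iUnion.1 hx
    refine ⟨Pi.single j 1, fun i => ?_, by simp, Function.update (fun i => (hne i).some) j x,
      fun i => ?_, by simp [Pi.single_apply]⟩
    · rcases eq_or_ne i j with rfl | h <;> simp [*]
    · rcases eq_or_ne i j with rfl | h
      · simpa using hj
      · simpa [h] using (hne i).some_mem
  · rintro _ ⟨ν, hν, hν1, z, hz, rfl⟩ _ ⟨ν', hν', hν1', z', hz', rfl⟩ a b ha hb hab
    choose w hw hw_eq using fun i =>
      (hconv i).exists_mem_add_smul_eq (hz i) (hz' i) (mul_nonneg ha (hν i))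
        (mul_nonneg hb (hν' i))
    refine ⟨fun i => a * ν i + b * ν' i, fun i => add_nonneg (mul_nonneg ha (hν i))
      (mul_nonneg hb (hν' i)), by simp [sum_add_distrib, ← mul_sum, *], w, hw, ?_⟩
    simp only [hw_eq, smul_sum, smul_smul, sum_add_distrib]
  · rintro _ ⟨ν, hν, hν1, z, hz, rfl⟩
    exact mem_convexHull_of_exists_fintype ν z hν hν1 (fun i => mem_iUnion_of_mem i (hz i)) rfl

section Combinations

variable {ι E : Type*} [Fintype ι] [AddCommGroup E] [Module ℝ E] [TopologicalSpace E]

/-- `⋃ {λ₁ • ri C₁ + ⋯ + λₘ • ri Cₘ | λᵢ > 0, ∑ λᵢ = 1}`, written pointwise. -/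
def intrinsicInteriorCombinations (C : ι → Set E) : Set E :=
  {x | ∃ lam : ι → ℝ, (∀ i, 0 < lam i) ∧ ∑ i, lam i = 1 ∧
    ∃ y : ι → E, (∀ i, y i ∈ intrinsicInterior ℝ (C i)) ∧ x = ∑ i, lam i • y i}

variable {C : ι → Set E}

theorem intrinsicInteriorCombinations_subset_convexHull :
    intrinsicInteriorCombinations C ⊆ convexHull ℝ (⋃ i, C i) := by
  rintro _ ⟨lam, hlam, hlam1, y, hy, rfl⟩
  exact mem_convexHull_of_exists_fintype lam y (fun i => (hlam i).le) hlam1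
    (fun i => mem_iUnion_of_mem i (intrinsicInterior_subset (hy i))) rfl

theorem intrinsicInteriorCombinations_nonempty [Nonempty ι]
    (h : ∀ i, (intrinsicInterior ℝ (C i)).Nonempty) :
    (intrinsicInteriorCombinations C).Nonempty := by
  choose y hy using h
  have hcard : (0 : ℝ) < Fintype.card ι := by exact_mod_cast Fintype.card_pos
  exact ⟨_, fun _ => (Fintype.card ι : ℝ)⁻¹, fun _ => by positivity,
    by simp [sum_const, card_univ, hcard.ne'], y, hy, rfl⟩

theorem combo_mem_intrinsicInteriorCombinations [IsTopologicalAddGroup E] [ContinuousSMul ℝ E]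
    (hne : ∀ i, (C i).Nonempty) (hconv : ∀ i, Convex ℝ (C i)) {e p : E}
    (he : e ∈ intrinsicInteriorCombinations C) (hp : p ∈ convexHull ℝ (⋃ i, C i)) {a b : ℝ}
    (ha : 0 < a) (hb : 0 ≤ b) (hab : a + b = 1) :
    a • e + b • p ∈ intrinsicInteriorCombinations C := by
  obtain ⟨lam, hlam, hlam1, y, hy, rfl⟩ := he
  obtain ⟨ν, hν, hν1, z, hz, rfl⟩ := (convexHull_iUnion hne hconv).subset hp
  set μ : ι → ℝ := fun i => a * lam i + b * ν i
  have hμ : ∀ i, 0 < μ i := fun i =>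
    add_pos_of_pos_of_nonneg (mul_pos ha (hlam i)) (mul_nonneg hb (hν i))
  refine ⟨μ, hμ, by simp [μ, sum_add_distrib, ← mul_sum, hlam1, hν1, hab],
    fun i => (a * lam i / μ i) • y i + (b * ν i / μ i) • z i, fun i => ?_, ?_⟩
  · exact (hconv i).combo_intrinsicInterior_self_mem_intrinsicInterior (hy i) (hz i)
      (div_pos (mul_pos ha (hlam i)) (hμ i)) (div_nonneg (mul_nonneg hb (hν i)) (hμ i).le)
      (by rw [← add_div, div_self (hμ i).ne'])
  · rw [smul_sum, smul_sum, ← sum_add_distrib]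
    refine sum_congr rfl fun i _ => ?_
    simp only [smul_add, smul_smul, mul_div_cancel₀ _ (hμ i).ne']

end Combinations

section FiniteDimensional

variable {ι E : Type*} [Fintype ι] [NormedAddCommGroup E] [NormedSpace ℝ E]
  [FiniteDimensional ℝ E] {C : ι → Set E}

theorem intrinsicInterior_convexHull_iUnion_subset (hne : ∀ i, (C i).Nonempty)
    (hconv : ∀ i, Convex ℝ (C i)) :
    intrinsicInterior ℝ (convexHull ℝ (⋃ i, C i)) ⊆ intrinsicInteriorCombinations C := by
  intro x hx
  obtain ⟨hxS, hseg⟩ :=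
    (convex_convexHull ℝ _).mem_intrinsicInterior_iff_forall_mem_openSegment.1 hx
  have : Nonempty ι := by
    obtain ⟨i, -⟩ := nonempty_iUnion.1 (convexHull_nonempty_iff.1 ⟨x, hxS⟩)
    exact ⟨i⟩
  obtain ⟨e, he⟩ := intrinsicInteriorCombinations_nonempty fun i =>
    (hne i).intrinsicInterior (hconv i)
  obtain ⟨q, hq, a, b, ha, hb, hab, rfl⟩ :=
    hseg e (intrinsicInteriorCombinations_subset_convexHull he)
  exact combo_mem_intrinsicInteriorCombinations hne hconv he hq ha hb.le hab

theorem intrinsicInteriorCombinations_subset_intrinsicInterior (hne : ∀ i, (C i).Nonempty)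
    (hconv : ∀ i, Convex ℝ (C i)) :
    intrinsicInteriorCombinations C ⊆ intrinsicInterior ℝ (convexHull ℝ (⋃ i, C i)) := by
  intro x hx
  refine (convex_convexHull ℝ _).mem_intrinsicInterior_iff_forall_mem_openSegment.2
    ⟨intrinsicInteriorCombinations_subset_convexHull hx, fun z hz => ?_⟩
  obtain ⟨lam, hlam, hlam1, y, hy, rfl⟩ := hx
  obtain ⟨ν, -, hν1, w, hw, rfl⟩ := (convexHull_iUnion hne hconv).subset hz
  set c : ℝ → ι → ℝ := fun t i => (1 + t) * lam i - t * ν i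
  have hc : ∀ i, Tendsto (c · i) (𝓝 0) (𝓝 (lam i)) := fun i =>
    (by fun_prop : Continuous (c · i)).tendsto' 0 (lam i) (by simp [c])
  have hevent : ∀ᶠ t in 𝓝 (0 : ℝ), ∀ i,
      0 < c t i ∧ y i + (t * ν i / c t i) • (y i - w i) ∈ C i := by
    refine eventually_all.2 fun i => ((hc i).eventually_const_lt (hlam i)).and ?_
    refine eventually_add_smul_sub_mem_of_mem_intrinsicInterior (hy i)
      (subset_affineSpan ℝ _ (hw i)) ?_
    have hr : Tendsto (fun t => t * ν i / c t i) (𝓝 0) (𝓝 (0 * ν i / lam i)) :=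
      (tendsto_id.mul_const (ν i)).div (hc i) (hlam i).ne'
    simpa using hr
  obtain ⟨t, ht, ht0⟩ := ((hevent.filter_mono nhdsWithin_le_nhds).and
    (self_mem_nhdsWithin (s := Ioi 0))).exists
  have hterm : ∀ i, c t i • (y i + (t * ν i / c t i) • (y i - w i)) =
      (1 + t) • (lam i • y i) - t • (ν i • w i) := fun i => by
    rw [smul_add, smul_smul, mul_div_cancel₀ _ (ht i).1.ne']
    module
  refine ⟨_, (convexHull_iUnion hne hconv).superset ⟨c t, fun i => (ht i).1.le, ?_, _,
    fun i => (ht i).2, rfl⟩, ?_⟩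
  · simp [c, sum_sub_distrib, ← mul_sum, hlam1, hν1]
  · rw [sum_congr rfl fun i _ => hterm i, sum_sub_distrib, ← smul_sum, ← smul_sum]
    convert mem_openSegment_add_smul_sub _ _ ht0 using 2
    module

theorem intrinsicInterior_convexHull_iUnion (hne : ∀ i, (C i).Nonempty)
    (hconv : ∀ i, Convex ℝ (C i)) :
    intrinsicInterior ℝ (convexHull ℝ (⋃ i, C i)) = intrinsicInteriorCombinations C :=
  (intrinsicInterior_convexHull_iUnion_subset hne hconv).antisymm
    (intrinsicInteriorCombinations_subset_intrinsicInterior hne hconv)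

end FiniteDimensional

theorem stmt_18 (n m : ℕ) (C : Fin m → Set (Fin n → ℝ))
    (hne : ∀ i, (C i).Nonempty) (hconv : ∀ i, Convex ℝ (C i)) :
    intrinsicInterior ℝ (convexHull ℝ (⋃ i, C i)) =
      {x | ∃ lam : Fin m → ℝ, (∀ i, 0 < lam i) ∧ ∑ i, lam i = 1 ∧
        ∃ y : Fin m → (Fin n → ℝ), (∀ i, y i ∈ intrinsicInterior ℝ (C i)) ∧
          x = ∑ i, lam i • y i} :=
  intrinsicInterior_convexHull_iUnion hne hconv
end
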